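/- arXiv:1803.11448 — 5 statements merged into one kernel-verified Lean document; each statement's English description precedes it below -/
import Mathlib

section
/- Let X be a nonempty set and A a nonempty parameter set. For a soft set F : A → Set X in S(X̃) (meaning either F α = ∅ for all α, or F α ≠ ∅ for all α), the elementary complement of F equals the relative complement of F; that is, the soft set whose value at each α ∈ A is the set of values x(α) of all soft elements x : A → X satisfying x(β) ∉ F(β) for all β ∈ A, equals the soft set α ↦ X \ F(α), provided X \ F(α) ≠ ∅ for all α ∈ A (or F(α) = X for all α). -/
namespace SoftE

/-- A soft set over `X` with parameter set `A`. -/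
abbrev SoftSet (X A : Type*) := A → Set X

variable {X A : Type*}

/-- A soft element `x : A → X` belongs to a soft set `F`. -/
def smem (x : A → X) (F : SoftSet X A) : Prop := ∀ α, x α ∈ F α

/-- The soft set generated by a collection of soft elements. -/
def SS (B : Set (A → X)) : SoftSet X A := fun α => {a | ∃ x ∈ B, x α = a}

/-- The null soft set. -/
def nullSoft (X A : Type*) : SoftSet X A := fun _ => ∅

/-- The absolute soft set. -/
def absSoft (X A : Type*) : SoftSet X A := fun _ => Set.univ

/-- Membership in `S(X̃)`: empty at every parameter, or nonempty at every parameter. -/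
def InS (F : SoftSet X A) : Prop := (∀ α, F α = ∅) ∨ (∀ α, F α ≠ ∅)

/-- Soft subset: pointwise inclusion. -/
def softSubset (F G : SoftSet X A) : Prop := ∀ α, F α ⊆ G α

/-- Elementary union of a set of soft sets. -/
def eUnionSet (s : Set (SoftSet X A)) : SoftSet X A := SS {x | ∃ F ∈ s, smem x F}

/-- Elementary union of an indexed family of soft sets. -/
def eUnionFam {ι : Type*} (F : ι → SoftSet X A) : SoftSet X A := SS {x | ∃ i, smem x (F i)}

/-- Binary elementary union. -/
def eUnion2 (F G : SoftSet X A) : SoftSet X A := SS {x | smem x F ∨ smem x G}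

/-- Binary elementary intersection. -/
def eInter2 (F G : SoftSet X A) : SoftSet X A := SS {x | smem x F ∧ smem x G}

/-- Elementary intersection of an indexed family of soft sets. -/
def eInterFam {ι : Type*} (F : ι → SoftSet X A) : SoftSet X A := SS {x | ∀ i, smem x (F i)}

/-- Elementary complement of a soft set. -/
def eCompl (F : SoftSet X A) : SoftSet X A := SS {x | ∀ α, x α ∉ F α}

/-- Relative (pointwise) complement of a soft set. -/
def relCompl (F : SoftSet X A) : SoftSet X A := fun α => (F α)ᶜ

/-- Relative complement inside a subset `Y ⊆ X`. -/
def relComplIn (Y : Set X) (F : SoftSet X A) : SoftSet X A := fun α => Y \ F α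

/-- Elementary complement relative to `Y ⊆ X`. -/
def eComplIn (Y : Set X) (F : SoftSet X A) : SoftSet X A :=
  SS {x | ∀ α, x α ∈ Y \ F α}

/-- A soft e-topology on the soft set `B`. -/
def IsETopologyOn (B : SoftSet X A) (τ : Set (SoftSet X A)) : Prop :=
  (∀ F ∈ τ, InS F ∧ softSubset F B) ∧
  nullSoft X A ∈ τ ∧ B ∈ τ ∧
  (∀ s ⊆ τ, eUnionSet s ∈ τ) ∧
  (∀ F ∈ τ, ∀ G ∈ τ, eInter2 F G ∈ τ)

/-- A soft e-topology on the absolute soft set `(X̃, A)`. -/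
def IsETopology (τ : Set (SoftSet X A)) : Prop := IsETopologyOn (absSoft X A) τ

/-- Soft e-closed set. -/
def IsEClosed (τ : Set (SoftSet X A)) (F : SoftSet X A) : Prop :=
  InS F ∧ InS (relCompl F) ∧ eCompl F ∈ τ

/-- Soft e-Hausdorff property relative to a base soft set `B`. -/
def IsEHausdorffOn (B : SoftSet X A) (τ : Set (SoftSet X A)) : Prop :=
  ∀ x y : A → X, smem x B → smem y B → (∀ α, x α ≠ y α) →
    ∃ F ∈ τ, ∃ G ∈ τ, smem x F ∧ smem y G ∧ ∀ α, F α ∩ G α = ∅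

/-- Soft e-Hausdorff space. -/
def IsEHausdorff (τ : Set (SoftSet X A)) : Prop := IsEHausdorffOn (absSoft X A) τ

/-- Soft e-quasi-compactness relative to a base soft set `B`. -/
def IsEQuasiCompactOn (B : SoftSet X A) (τ : Set (SoftSet X A)) : Prop :=
  ∀ s ⊆ τ, eUnionSet s = B → ∃ t ⊆ s, t.Finite ∧ eUnionSet t = B

/-- Soft e-quasi-compact space. -/
def IsEQuasiCompact (τ : Set (SoftSet X A)) : Prop :=
  IsEQuasiCompactOn (absSoft X A) τ

/-- Soft e-compact set. -/
def IsECompactSet (τ : Set (SoftSet X A)) (K : SoftSet X A) : Prop :=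
  InS K ∧ InS (relCompl K) ∧
  ∀ s ⊆ τ, softSubset K (eUnionSet s) →
    ∃ t ⊆ s, t.Finite ∧ softSubset K (eUnionSet t)

/-- The subspace soft e-topology `τ_Y`. -/
def subTop (τ : Set (SoftSet X A)) (Y : Set X) : Set (SoftSet X A) :=
  {G | ∃ O ∈ τ, G = fun α => O α ∩ Y}

/-- Soft neighborhood of a soft element. -/
def IsNbd (τ : Set (SoftSet X A)) (x : A → X) (N : SoftSet X A) : Prop :=
  N ≠ nullSoft X A ∧ ∃ G ∈ τ, smem x G ∧ softSubset G N

/-- Soft interior of a soft set. -/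
def sInt (τ : Set (SoftSet X A)) (F : SoftSet X A) : SoftSet X A :=
  SS {x | smem x F ∧ ∃ G ∈ τ, smem x G ∧ softSubset G F}

end SoftE

open SoftE


namespace SoftE

variable {X A : Type*}

theorem eCompl_subset_relCompl (F : SoftSet X A) (α : A) : eCompl F α ⊆ relCompl F α := by
  rintro _ ⟨x, hx, rfl⟩
  exact hx α

/-- A value outside `F α` extends to a soft element of the elementary complement by
choosing, at every other parameter, some point outside `F β`. -/
theorem relCompl_subset_eCompl {F : SoftSet X A} (h : ∀ β, (F β)ᶜ.Nonempty) (α : A) :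
    relCompl F α ⊆ eCompl F α := by
  classical
  intro a ha
  choose g hg using h
  refine ⟨Function.update g α a, fun β => ?_, Function.update_self α a g⟩
  rcases eq_or_ne β α with rfl | hβ
  · rw [Function.update_self]; exact ha
  · rw [Function.update_of_ne hβ]; exact hg β

end SoftE

theorem stmt0_general {X A : Type*}
    (F : SoftSet X A)
    (h : (∀ α, (F α)ᶜ ≠ (∅ : Set X)) ∨ (∀ α, F α = Set.univ)) :
    eCompl F = relCompl F := by
  funext α
  refine (eCompl_subset_relCompl F α).antisymm ?_
  rcases h with h | h
  · exact relCompl_subset_eCompl (fun β => Set.nonempty_iff_ne_empty.2 (h β)) α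
  · simp [relCompl, h]

/-- for `F ∈ S(X̃)`, the elementary complement of `F` equals the
relative complement of `F`, provided `X \ F α ≠ ∅` for all `α` or `F α = X` for all `α`. -/
theorem stmt0 {X A : Type*} [Nonempty X] [Nonempty A]
    (F : SoftSet X A) (hF : InS F)
    (h : (∀ α, (F α)ᶜ ≠ (∅ : Set X)) ∨ (∀ α, F α = Set.univ)) :
    eCompl F = relCompl F :=
  stmt0_general F h
end

section
/- Let τ be a soft e-topology on (X̃, A) such that for all O₁, O₂ ∈ τ the pointwise intersection α ↦ O₁(α) ∩ O₂(α) lies in S(X̃) (i.e. is nonempty at every parameter or empty at every parameter). Let Y ⊆ X be nonempty such that for every O ∈ τ the pointwise intersection α ↦ O(α) ∩ Y lies in S(X̃). Then the collection τ_Y = {soft set whose value at α is O(α) ∩ Y | O ∈ τ} is a soft e-topology on (Ỹ, A). -/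
open SoftE

/-! Restricting to `Y` commutes with elementary unions and intersections as long as the restricted
soft sets lie in `S(X̃)`: a point of `O α ∩ Y` then extends to a soft element of the restriction,
which witnesses it in the elementary operation on the restricted sets. -/

namespace SoftE

variable {X A : Type*}

open Classical in
lemma InS.exists_smem_apply_eq {F : SoftSet X A} (hF : InS F) {α : A} {a : X}
    (ha : a ∈ F α) : ∃ x : A → X, smem x F ∧ x α = a := by
  rcases hF with hempty | hne
  · simp [hempty α] at ha
  · have hF : ∀ β, (F β).Nonempty := fun β => Set.nonempty_iff_ne_empty.2 (hne β)
    refine ⟨fun β => if β = α then a else (hF β).some, fun β => ?_, by simp⟩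
    by_cases hβ : β = α
    · subst hβ; simpa using ha
    · simpa [hβ] using (hF β).some_mem

lemma smem_inter_iff {x : A → X} {F : SoftSet X A} {Y : Set X} :
    smem x (fun α => F α ∩ Y) ↔ smem x F ∧ ∀ α, x α ∈ Y :=
  forall_and

lemma smem_of_smem_eInter2 {x : A → X} {F G : SoftSet X A} (hx : smem x (eInter2 F G)) :
    smem x F ∧ smem x G := by
  refine forall_and.1 fun α => ?_
  obtain ⟨z, ⟨hzF, hzG⟩, hz⟩ := hx α
  exact hz ▸ ⟨hzF α, hzG α⟩

lemma subTop_eq_image (τ : Set (SoftSet X A)) (Y : Set X) :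
    subTop τ Y = (fun O α => O α ∩ Y) '' τ := by
  ext G
  simp only [subTop, Set.mem_ofPred_eq, Set.mem_image, eq_comm]

lemma eUnionSet_image_inter {t : Set (SoftSet X A)} {Y : Set X}
    (ht : ∀ O ∈ t, InS (fun α => O α ∩ Y)) :
    eUnionSet ((fun O α => O α ∩ Y) '' t) = fun α => eUnionSet t α ∩ Y := by
  funext α
  ext a
  constructor
  · rintro ⟨x, ⟨_, ⟨O, hO, rfl⟩, hxO⟩, rfl⟩
    exact ⟨⟨x, ⟨O, hO, fun β => (hxO β).1⟩, rfl⟩, (hxO α).2⟩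
  · rintro ⟨⟨x, ⟨O, hO, hxO⟩, rfl⟩, hxY⟩
    obtain ⟨y, hy, hyx⟩ := (ht O hO).exists_smem_apply_eq ⟨hxO α, hxY⟩
    exact ⟨y, ⟨_, ⟨O, hO, rfl⟩, hy⟩, hyx⟩

lemma eInter2_inter {F G : SoftSet X A} {Y : Set X}
    (h : InS (fun α => eInter2 F G α ∩ Y)) :
    eInter2 (fun α => F α ∩ Y) (fun α => G α ∩ Y) = fun α => eInter2 F G α ∩ Y := by
  funext α
  ext a
  constructor
  · rintro ⟨x, ⟨hxF, hxG⟩, rfl⟩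
    exact ⟨⟨x, ⟨fun β => (hxF β).1, fun β => (hxG β).1⟩, rfl⟩, (hxF α).2⟩
  · intro ha
    obtain ⟨y, hy, rfl⟩ := h.exists_smem_apply_eq ha
    obtain ⟨hyFG, hyY⟩ := smem_inter_iff.1 hy
    obtain ⟨hyF, hyG⟩ := smem_of_smem_eInter2 hyFG
    exact ⟨y, ⟨smem_inter_iff.2 ⟨hyF, hyY⟩, smem_inter_iff.2 ⟨hyG, hyY⟩⟩, rfl⟩

end SoftE

theorem stmt1_general {X A : Type*}
    (τ : Set (SoftSet X A)) (hτ : IsETopology τ)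
    (Y : Set X)
    (hYint : ∀ O ∈ τ, InS (fun α => O α ∩ Y)) :
    IsETopologyOn (fun _ => Y) (subTop τ Y) := by
  obtain ⟨-, hnull, habs, hUn, hIn⟩ := hτ
  refine ⟨?_, ⟨nullSoft X A, hnull, ?_⟩, ⟨absSoft X A, habs, ?_⟩, ?_, ?_⟩
  · rintro G ⟨O, hO, rfl⟩
    exact ⟨hYint O hO, fun α => Set.inter_subset_right⟩
  · funext α; simp [nullSoft]
  · funext α; simp [absSoft]
  · intro s hs
    rw [subTop_eq_image] at hs ⊢
    set restrict : SoftSet X A → SoftSet X A := fun O α => O α ∩ Y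
    have hs_eq : restrict '' (τ ∩ restrict ⁻¹' s) = s := by
      rw [Set.image_inter_preimage, Set.inter_eq_right.2 hs]
    refine ⟨eUnionSet (τ ∩ restrict ⁻¹' s), hUn _ Set.inter_subset_left, ?_⟩
    exact (eUnionSet_image_inter fun O hO => hYint O hO.1).symm.trans (congrArg eUnionSet hs_eq)
  · rintro _ ⟨O₁, hO₁, rfl⟩ _ ⟨O₂, hO₂, rfl⟩
    have hO₁₂ := hIn O₁ hO₁ O₂ hO₂
    exact ⟨eInter2 O₁ O₂, hO₁₂, eInter2_inter (hYint _ hO₁₂)⟩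

/-- the subspace collection `τ_Y` is a soft e-topology on `(Ỹ, A)`. -/
theorem stmt1 {X A : Type*} [Nonempty A]
    (τ : Set (SoftSet X A)) (hτ : IsETopology τ)
    (hint : ∀ O₁ ∈ τ, ∀ O₂ ∈ τ, InS (fun α => O₁ α ∩ O₂ α))
    (Y : Set X) (hY : Y.Nonempty)
    (hYint : ∀ O ∈ τ, InS (fun α => O α ∩ Y)) :
    IsETopologyOn (fun _ => Y) (subTop τ Y) :=
  stmt1_general τ hτ Y hYint
end

section
/- Under the hypotheses of the subspace construction (τ a soft e-topology on (X̃,A) with pointwise intersections of members of τ in S(X̃), Y ⊆ X nonempty with O ∩̃ Ỹ ∈ S(X̃) for all O ∈ τ), if a soft set Z ∈ S(Ỹ) is soft e_Y-closed in (Ỹ, τ_Y, A) (i.e. its Y-relative complement α ↦ Y \ Z(α) lies in S(Ỹ) and its Y-elementary complement lies in τ_Y), then there exists a soft e-closed set F in (X̃, τ, A) such that Z equals the elementary intersection of F with Ỹ. -/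
open SoftE

/-!
When every level of a soft set is nonempty (or every level is empty), the soft elements of it
generate it back: through any point of one level a soft element can be threaded by choosing
points in the other levels. Consequently elementary complements and elementary intersections of
such soft sets are the pointwise ones. Writing the `Y`-elementary complement of `Z` as `O ∩ Ỹ`
with `O ∈ τ`, the pointwise complement of `O` is soft e-closed and meets `Ỹ` exactly in `Z`;
the null `Z` is cut out by the null soft set.
-/

namespace SoftE

variable {X A : Type*}

theorem SS_setOf_smem_of_InS {F : SoftSet X A} (hF : InS F) : SS {x | smem x F} = F := by
  classical
  funext α
  ext a
  refine ⟨fun ⟨x, hx, hxa⟩ => hxa ▸ hx α, fun ha => ?_⟩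
  rcases hF with hempty | hne
  · exact absurd (hempty α ▸ ha) (Set.notMem_empty a)
  · choose pt hpt using fun β => Set.nonempty_iff_ne_empty.2 (hne β)
    refine ⟨Function.update pt α a, fun β => ?_, Function.update_self α a pt⟩
    rcases eq_or_ne β α with rfl | hβ
    · simpa using ha
    · simpa [Function.update_of_ne hβ] using hpt β

theorem InS_const (S : Set X) : InS (fun _ : A => S) := by
  by_cases hS : S = ∅
  · exact Or.inl fun _ => hS
  · exact Or.inr fun _ => hS

theorem eCompl_eq_of_InS {F : SoftSet X A} (hF : InS (relCompl F)) : eCompl F = relCompl F :=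
  SS_setOf_smem_of_InS hF

theorem eComplIn_eq_of_InS {Y : Set X} {F : SoftSet X A} (hF : InS (relComplIn Y F)) :
    eComplIn Y F = relComplIn Y F :=
  SS_setOf_smem_of_InS hF

theorem eInter2_eq_of_InS {F G : SoftSet X A} (h : InS fun α => F α ∩ G α) :
    eInter2 F G = fun α => F α ∩ G α := by
  have hsmem : {x | smem x F ∧ smem x G} = {x | smem x fun α => F α ∩ G α} := by
    ext x
    simp only [Set.mem_ofPred_eq, smem, Set.mem_inter_iff, forall_and]
  rw [eInter2, hsmem, SS_setOf_smem_of_InS h]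

theorem isEClosed_relCompl {τ : Set (SoftSet X A)} (hτ : ∀ O ∈ τ, InS O) {O : SoftSet X A}
    (hO : O ∈ τ) (hOc : InS (relCompl O)) : IsEClosed τ (relCompl O) := by
  have hcc : relCompl (relCompl O) = O := funext fun α => compl_compl (O α)
  have hOcc : InS (relCompl (relCompl O)) := by rw [hcc]; exact hτ O hO
  refine ⟨hOc, hOcc, ?_⟩
  rwa [eCompl_eq_of_InS hOcc, hcc]

theorem isEClosed_nullSoft {τ : Set (SoftSet X A)} (habs : absSoft X A ∈ τ) :
    IsEClosed τ (nullSoft X A) := by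
  have hc : relCompl (nullSoft X A) = absSoft X A := funext fun _ => Set.compl_empty
  have hcS : InS (relCompl (nullSoft X A)) := by rw [hc]; exact InS_const Set.univ
  refine ⟨InS_const ∅, hcS, ?_⟩
  rwa [eCompl_eq_of_InS hcS, hc]

end SoftE

theorem Set.compl_inter_eq_of_inter_eq_diff {X : Type*} {O Y Z : Set X} (hZY : Z ⊆ Y)
    (h : O ∩ Y = Y \ Z) : Oᶜ ∩ Y = Z :=
  calc Oᶜ ∩ Y = Y \ (O ∩ Y) := by rw [Set.sdiff_inter_self_eq_sdiff, Set.sdiff_eq_compl_inter]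
    _ = Z := by rw [h, Set.sdiff_sdiff_cancel_left hZY]

theorem stmt2_general {X A : Type*}
    (τ : Set (SoftSet X A)) (hτ : IsETopology τ)
    (Y : Set X)
    (Z : SoftSet X A) (hZS : InS Z) (hZY : softSubset Z (fun _ => Y))
    (hZrc : InS (relComplIn Y Z)) (hZec : eComplIn Y Z ∈ subTop τ Y) :
    ∃ F : SoftSet X A, IsEClosed τ F ∧ Z = eInter2 F (fun _ => Y) := by
  obtain ⟨hτS, -, habs, -, -⟩ := hτ
  rcases hZS with hZempty | hZne
  · refine ⟨nullSoft X A, isEClosed_nullSoft habs, ?_⟩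
    rw [eInter2_eq_of_InS (F := nullSoft X A) (InS_const (∅ ∩ Y))]
    funext α
    simp [hZempty α, nullSoft]
  · obtain ⟨O, hO, hZO⟩ := hZec
    rw [eComplIn_eq_of_InS hZrc] at hZO
    have hOZ : (fun α => relCompl O α ∩ Y) = Z := funext fun α =>
      Set.compl_inter_eq_of_inter_eq_diff (hZY α) (congrFun hZO α).symm
    have hOc : InS (relCompl O) := Or.inr fun α hα => hZne α <| by
      rw [← congrFun hOZ α, hα, Set.empty_inter]
    refine ⟨relCompl O, isEClosed_relCompl (fun O hO => (hτS O hO).1) hO hOc, ?_⟩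
    rw [eInter2_eq_of_InS (hOZ ▸ Or.inr hZne), hOZ]

/-- a soft `e_Y`-closed set in the subspace is the elementary
intersection of a soft e-closed set of the ambient space with `Ỹ`. -/
theorem stmt2 {X A : Type*} [Nonempty A]
    (τ : Set (SoftSet X A)) (hτ : IsETopology τ)
    (hint : ∀ O₁ ∈ τ, ∀ O₂ ∈ τ, InS (fun α => O₁ α ∩ O₂ α))
    (Y : Set X) (hY : Y.Nonempty)
    (hYint : ∀ O ∈ τ, InS (fun α => O α ∩ Y))
    (Z : SoftSet X A) (hZS : InS Z) (hZY : softSubset Z (fun _ => Y))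
    (hZrc : InS (relComplIn Y Z)) (hZec : eComplIn Y Z ∈ subTop τ Y) :
    ∃ F : SoftSet X A, IsEClosed τ F ∧ Z = eInter2 F (fun _ => Y) :=
  stmt2_general τ hτ Y Z hZS hZY hZrc hZec
end

section
/- Let (X̃, τ, A) be a soft e-Hausdorff space such that the pointwise intersection of any two members of τ lies in S(X̃). If F is a soft e-compact set, then F is a soft e-closed set. -/
open SoftE

/-!
Let `y` be a soft element lying outside `F` at every parameter. Since `F ∈ S(X̃)`, every point
of `F α` is the `α`-value of a soft element of `F`, and the Hausdorff property separates that
soft element from `y`; so the open sets separable from `y` cover `F`. Compactness leaves finitely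
many of them, and the elementary intersection of the corresponding neighbourhoods of `y` is an
open soft set containing `y` and missing `F`. Hence the elementary complement of `F` is the
elementary union of the open sets disjoint from `F`, which is open.
-/

namespace SoftE

variable {X A : Type*}

theorem eInter2_subset_inter {F G : SoftSet X A} (α : A) : eInter2 F G α ⊆ F α ∩ G α := by
  rintro _ ⟨x, ⟨hxF, hxG⟩, rfl⟩
  exact ⟨hxF α, hxG α⟩

theorem disjoint_eUnionSet {W : SoftSet X A} {t : Set (SoftSet X A)} (α : A)
    (h : ∀ G ∈ t, Disjoint (W α) (G α)) : Disjoint (W α) (eUnionSet t α) := by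
  rw [Set.disjoint_right]
  rintro _ ⟨x, ⟨G, hGt, hxG⟩, rfl⟩
  exact Set.disjoint_right.mp (h G hGt) (hxG α)

theorem InS.exists_smem_eq {F : SoftSet X A} (hF : InS F) {α : A} {a : X} (ha : a ∈ F α) :
    ∃ z : A → X, smem z F ∧ z α = a := by
  have hne : ∀ β, (F β).Nonempty := by
    rcases hF with hemp | hne
    · exact absurd ha (by simp [hemp α])
    · exact fun β => Set.nonempty_iff_ne_empty.2 (hne β)
  classical
  refine ⟨Function.update (fun β => (hne β).some) α a, fun β => ?_, by simp⟩
  rcases eq_or_ne β α with rfl | hβ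
  · simpa using ha
  · simpa [Function.update_of_ne hβ] using (hne β).some_mem

def separatedFrom (τ : Set (SoftSet X A)) (y : A → X) : Set (SoftSet X A) :=
  {G | G ∈ τ ∧ ∃ V ∈ τ, smem y V ∧ ∀ β, Disjoint (V β) (G β)}

theorem subset_eUnionSet_separatedFrom {τ : Set (SoftSet X A)} (hH : IsEHausdorff τ)
    {F : SoftSet X A} (hF : InS F) {y : A → X} (hy : ∀ α, y α ∉ F α) :
    softSubset F (eUnionSet (separatedFrom τ y)) := by
  intro α a ha
  obtain ⟨z, hzF, rfl⟩ := hF.exists_smem_eq ha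
  have hzy : ∀ β, z β ≠ y β := fun β h => hy β (h ▸ hzF β)
  obtain ⟨U, hUτ, V, hVτ, hzU, hyV, hUV⟩ :=
    hH z y (fun _ => trivial) (fun _ => trivial) hzy
  refine ⟨z, ⟨U, ⟨hUτ, V, hVτ, hyV, fun β => ?_⟩, hzU⟩, rfl⟩
  rw [Set.disjoint_iff_inter_eq_empty, Set.inter_comm, hUV β]

theorem exists_mem_smem_disjoint_of_finite {τ : Set (SoftSet X A)} (hτ : IsETopology τ)
    (y : A → X) {t : Set (SoftSet X A)} (ht : t.Finite) (hts : t ⊆ separatedFrom τ y) :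
    ∃ W ∈ τ, smem y W ∧ ∀ G ∈ t, ∀ α, Disjoint (W α) (G α) := by
  obtain ⟨-, -, habs, -, hinter⟩ := hτ
  induction t, ht using Set.Finite.induction_on with
  | empty => exact ⟨absSoft X A, habs, fun _ => trivial, by simp⟩
  | @insert G t _ _ ih =>
    obtain ⟨-, V, hVτ, hyV, hVG⟩ := hts (Set.mem_insert G t)
    obtain ⟨W, hWτ, hyW, hWt⟩ := ih ((Set.subset_insert G t).trans hts)
    refine ⟨eInter2 V W, hinter V hVτ W hWτ, fun α => ⟨y, ⟨hyV, hyW⟩, rfl⟩, ?_⟩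
    rintro G' (rfl | hG') α
    · exact (hVG α).mono_left ((eInter2_subset_inter α).trans Set.inter_subset_left)
    · exact (hWt G' hG' α).mono_left ((eInter2_subset_inter α).trans Set.inter_subset_right)

theorem IsECompactSet.exists_mem_smem_disjoint {τ : Set (SoftSet X A)} (hτ : IsETopology τ)
    (hH : IsEHausdorff τ) {F : SoftSet X A} (hF : IsECompactSet τ F) {y : A → X}
    (hy : ∀ α, y α ∉ F α) : ∃ W ∈ τ, smem y W ∧ ∀ α, Disjoint (W α) (F α) := by
  obtain ⟨hFS, -, hcpt⟩ := hF
  obtain ⟨t, hts, htf, hFt⟩ :=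
    hcpt _ (fun _ hG => hG.1) (subset_eUnionSet_separatedFrom hH hFS hy)
  obtain ⟨W, hWτ, hyW, hWt⟩ := exists_mem_smem_disjoint_of_finite hτ y htf hts
  exact ⟨W, hWτ, hyW, fun α => (disjoint_eUnionSet α fun G hG => hWt G hG α).mono_right (hFt α)⟩

theorem eCompl_eq_eUnionSet {τ : Set (SoftSet X A)} {F : SoftSet X A}
    (h : ∀ y : A → X, (∀ α, y α ∉ F α) → ∃ W ∈ τ, smem y W ∧ ∀ α, Disjoint (W α) (F α)) :
    eCompl F = eUnionSet {W | W ∈ τ ∧ ∀ α, Disjoint (W α) (F α)} := by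
  funext α
  ext a
  constructor
  · rintro ⟨y, hy, rfl⟩
    obtain ⟨W, hWτ, hyW, hWF⟩ := h y hy
    exact ⟨y, ⟨W, ⟨hWτ, hWF⟩, hyW⟩, rfl⟩
  · rintro ⟨x, ⟨W, ⟨-, hWF⟩, hxW⟩, rfl⟩
    exact ⟨x, fun β => Set.disjoint_left.mp (hWF β) (hxW β), rfl⟩

end SoftE

theorem stmt8_general {X A : Type*}
    (τ : Set (SoftSet X A)) (hτ : IsETopology τ) (hH : IsEHausdorff τ)
    (F : SoftSet X A) (hF : IsECompactSet τ F) :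
    IsEClosed τ F := by
  refine ⟨hF.1, hF.2.1, ?_⟩
  rw [eCompl_eq_eUnionSet fun _ hy => hF.exists_mem_smem_disjoint hτ hH hy]
  obtain ⟨-, -, -, hunion, -⟩ := hτ
  exact hunion _ fun _ hW => hW.1

/-- in a soft e-Hausdorff space with pointwise intersections of
open sets in `S(X̃)`, every soft e-compact set is soft e-closed. -/
theorem stmt8 {X A : Type*}
    (τ : Set (SoftSet X A)) (hτ : IsETopology τ) (hH : IsEHausdorff τ)
    (hint : ∀ O₁ ∈ τ, ∀ O₂ ∈ τ, InS (fun α => O₁ α ∩ O₂ α))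
    (F : SoftSet X A) (hF : IsECompactSet τ F) :
    IsEClosed τ F :=
  stmt8_general τ hτ hH F hF
end

section
/- Let (X̃, τ, A) be a soft e-compact soft e-Hausdorff space such that pointwise intersections of members of τ lie in S(X̃). Then the elementary intersection of any family of soft e-compact sets, if it is not the null soft set, is a soft e-compact set. -/
/-! In a soft e-Hausdorff space a soft e-compact set `C` is soft e-closed: a soft element
avoiding `C` is separated from every soft element of `C`, finitely many of the separating
neighbourhoods cover `C`, and the elementary intersection of the corresponding neighbourhoods
of the given element is open and misses `C`. Off the null soft set an elementary intersection
is the pointwise intersection, so elementary intersections of soft e-closed sets are soft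
e-closed. Being soft e-closed in the soft e-compact absolute soft set, the intersection is
soft e-compact. -/

namespace SoftE

variable {X A : Type*}

lemma smem_SS {B : Set (A → X)} {x : A → X} (hx : x ∈ B) : smem x (SS B) :=
  fun _ => ⟨x, hx, rfl⟩

lemma inS_SS (B : Set (A → X)) : InS (SS B) := by
  rcases B.eq_empty_or_nonempty with rfl | ⟨x, hx⟩
  · exact Or.inl fun _ => Set.eq_empty_of_forall_notMem fun _ ⟨_, hy, _⟩ => hy
  · exact Or.inr fun α => Set.nonempty_iff_ne_empty.1 ⟨x α, x, hx, rfl⟩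

lemma inS_absSoft : InS (absSoft X A) := by
  rcases isEmpty_or_nonempty X with hX | ⟨⟨a⟩⟩
  · exact Or.inl fun _ => Set.eq_empty_of_isEmpty _
  · exact Or.inr fun _ => Set.nonempty_iff_ne_empty.1 ⟨a, trivial⟩

lemma smem_update [DecidableEq A] {C : SoftSet X A} {x : A → X} (hx : smem x C) {α : A} {a : X}
    (ha : a ∈ C α) : smem (Function.update x α a) C := by
  intro β
  rcases eq_or_ne β α with rfl | hβ
  · simpa using ha
  · simpa [Function.update_of_ne hβ] using hx β

lemma InS.exists_smem_of_mem {C : SoftSet X A} (hC : InS C) {α : A} {a : X} (ha : a ∈ C α) :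
    ∃ x, smem x C ∧ x α = a := by
  classical
  rcases hC with hC | hC
  · exact absurd ha (by simp [hC α])
  · choose x hx using fun β => Set.nonempty_iff_ne_empty.2 (hC β)
    exact ⟨Function.update x α a, smem_update hx ha, Function.update_self ..⟩

lemma InS.softSubset_eUnionSet {G : SoftSet X A} (hG : InS G) {s : Set (SoftSet X A)}
    (hGs : G ∈ s) : softSubset G (eUnionSet s) := fun _ _ ha =>
  let ⟨x, hx, hxa⟩ := hG.exists_smem_of_mem ha
  ⟨x, ⟨G, hGs, hx⟩, hxa⟩

lemma exists_mem_of_mem_eUnionSet {s : Set (SoftSet X A)} {α : A} {a : X}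
    (ha : a ∈ eUnionSet s α) : ∃ G ∈ s, a ∈ G α := by
  obtain ⟨x, ⟨G, hGs, hxG⟩, rfl⟩ := ha
  exact ⟨G, hGs, hxG α⟩

lemma eCompl_apply_subset (F : SoftSet X A) (α : A) : eCompl F α ⊆ (F α)ᶜ := by
  rintro _ ⟨x, hx, rfl⟩
  exact hx α

lemma eCompl_apply {F : SoftSet X A} (hF : InS (relCompl F)) (α : A) :
    eCompl F α = (F α)ᶜ := by
  refine (eCompl_apply_subset F α).antisymm fun a ha => ?_
  obtain ⟨x, hx, rfl⟩ := hF.exists_smem_of_mem ha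
  exact ⟨x, hx, rfl⟩

lemma eCompl_nullSoft : eCompl (nullSoft X A) = absSoft X A :=
  funext fun _ => Set.eq_univ_of_forall fun a => ⟨fun _ => a, fun _ h => h, rfl⟩

lemma smem_eInterFam_iff {ι : Type*} {F : ι → SoftSet X A} {x : A → X} :
    smem x (eInterFam F) ↔ ∀ i, smem x (F i) := by
  refine ⟨fun hx i α => ?_, fun hx => smem_SS hx⟩
  obtain ⟨y, hy, hyx⟩ := hx α
  exact hyx ▸ hy i α

lemma eInterFam_apply_subset {ι : Type*} (F : ι → SoftSet X A) (i : ι) (α : A) :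
    eInterFam F α ⊆ F i α := by
  rintro _ ⟨x, hx, rfl⟩
  exact hx i α

lemma eInterFam_apply {ι : Type*} {F : ι → SoftSet X A} (hF : eInterFam F ≠ nullSoft X A)
    (α : A) : eInterFam F α = ⋂ i, F i α := by
  classical
  obtain ⟨x, hx⟩ : ∃ x, ∀ i, smem x (F i) := by
    by_contra! h
    exact hF (funext fun β => Set.eq_empty_of_forall_notMem fun _ ⟨x, hx, _⟩ =>
      (h x).elim fun i hi => hi (hx i))
  refine (Set.subset_iInter (eInterFam_apply_subset F · α)).antisymm fun a ha => ?_
  exact ⟨Function.update x α a, fun i => smem_update (hx i) (Set.mem_iInter.1 ha i),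
    Function.update_self ..⟩

namespace IsETopology

variable {τ : Set (SoftSet X A)}

lemma absSoft_mem (hτ : IsETopology τ) : absSoft X A ∈ τ := hτ.2.2.1

lemma eUnionSet_mem (hτ : IsETopology τ) {s : Set (SoftSet X A)} (hs : s ⊆ τ) :
    eUnionSet s ∈ τ :=
  hτ.2.2.2.1 s hs

lemma eInter2_mem (hτ : IsETopology τ) {F G : SoftSet X A} (hF : F ∈ τ) (hG : G ∈ τ) :
    eInter2 F G ∈ τ :=
  hτ.2.2.2.2 F hF G hG

lemma eInterFam_mem (hτ : IsETopology τ) {ι : Type*} [Finite ι] {F : ι → SoftSet X A}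
    (hF : ∀ i, F i ∈ τ) : eInterFam F ∈ τ := by
  induction ι using Finite.induction_empty_option with
  | of_equiv e ih =>
    have h : eInterFam F = eInterFam (F ∘ e) :=
      congrArg SS (Set.ext fun _ => e.forall_congr_right.symm)
    exact h ▸ ih fun i => hF (e i)
  | h_empty =>
    have h : eInterFam F = absSoft X A :=
      funext fun _ => Set.eq_univ_of_forall fun a => ⟨fun _ => a, fun i => i.elim, rfl⟩
    exact h ▸ hτ.absSoft_mem
  | h_option ih =>
    have h : eInterFam F = eInter2 (F none) (eInterFam (F ∘ some)) :=
      congrArg SS <| Set.ext fun _ =>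
        Option.forall.trans (and_congr_right' smem_eInterFam_iff.symm)
    exact h ▸ hτ.eInter2_mem (hF none) (ih fun i => hF (some i))

end IsETopology

variable {τ : Set (SoftSet X A)}

namespace IsECompactSet

lemma exists_open_disjoint (hτ : IsETopology τ) (hH : IsEHausdorff τ) {C : SoftSet X A}
    (hC : IsECompactSet τ C) {x : A → X} (hx : ∀ α, x α ∉ C α) :
    ∃ G ∈ τ, smem x G ∧ ∀ α, Disjoint (G α) (C α) := by
  choose! U hU V hV hxU hyV hUV using fun y (hy : smem y C) =>
    hH x y (fun _ => trivial) (fun _ => trivial) fun α h => hx α (h ▸ hy α)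
  have hcover : softSubset C (eUnionSet (V '' {y | smem y C})) := fun α b hb => by
    obtain ⟨y, hy, rfl⟩ := hC.1.exists_smem_of_mem hb
    exact ⟨y, ⟨V y, ⟨y, hy, rfl⟩, hyV y hy⟩, rfl⟩
  obtain ⟨u, huC, hufin, hucov⟩ :=
    Set.exists_subset_image_finite_and.1 (hC.2.2 _ (Set.image_subset_iff.2 hV) hcover)
  have : Finite u := hufin
  refine ⟨eInterFam fun y : u => U y, hτ.eInterFam_mem fun y => hU y (huC y.2),
    smem_SS fun y => hxU y (huC y.2), fun α => Set.disjoint_right.2 fun b hb hbU => ?_⟩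
  obtain ⟨_, ⟨y, hyu, rfl⟩, hbV⟩ := exists_mem_of_mem_eUnionSet (hucov α hb)
  have hbU' : b ∈ U y α := eInterFam_apply_subset (fun y : u => U y) ⟨y, hyu⟩ α hbU
  exact Set.eq_empty_iff_forall_notMem.1 (hUV y (huC hyu) α) b ⟨hbU', hbV⟩

lemma eCompl_mem (hτ : IsETopology τ) (hH : IsEHausdorff τ) {C : SoftSet X A}
    (hC : IsECompactSet τ C) : eCompl C ∈ τ := by
  have h : eCompl C = eUnionSet {G | G ∈ τ ∧ ∀ α, Disjoint (G α) (C α)} := by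
    funext α
    refine (eCompl_apply hC.2.1 α).trans (Set.ext fun a => ⟨fun ha => ?_, fun ha => ?_⟩)
    · obtain ⟨x, hx, rfl⟩ := hC.2.1.exists_smem_of_mem ha
      obtain ⟨G, hGτ, hxG, hGC⟩ := hC.exists_open_disjoint hτ hH hx
      exact ⟨x, ⟨G, ⟨hGτ, hGC⟩, hxG⟩, rfl⟩
    · obtain ⟨G, ⟨-, hGC⟩, haG⟩ := exists_mem_of_mem_eUnionSet ha
      exact Set.disjoint_left.1 (hGC α) haG
  exact h ▸ hτ.eUnionSet_mem fun _ hG => hG.1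

lemma isEClosed (hτ : IsETopology τ) (hH : IsEHausdorff τ) {C : SoftSet X A}
    (hC : IsECompactSet τ C) : IsEClosed τ C :=
  ⟨hC.1, hC.2.1, hC.eCompl_mem hτ hH⟩

end IsECompactSet

lemma isECompactSet_absSoft (hqc : IsEQuasiCompact τ) : IsECompactSet τ (absSoft X A) := by
  refine ⟨inS_absSoft, Or.inl fun _ => Set.compl_univ, fun s hs hcov => ?_⟩
  obtain ⟨t, hts, htfin, ht⟩ :=
    hqc s hs (funext fun α => Set.eq_univ_of_univ_subset (hcov α))
  exact ⟨t, hts, htfin, fun α => (congrFun ht α).ge⟩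

lemma inS_relCompl_eInterFam {ι : Type*} {K : ι → SoftSet X A}
    (hK : ∀ i, InS (relCompl (K i))) : InS (relCompl (eInterFam K)) := by
  by_cases h : ∃ i, ∀ α, (K i α)ᶜ ≠ ∅
  · obtain ⟨i, hi⟩ := h
    refine Or.inr fun α => Set.nonempty_iff_ne_empty.1 ?_
    exact (Set.nonempty_iff_ne_empty.2 (hi α)).mono
      (Set.compl_subset_compl.2 (eInterFam_apply_subset K i α))
  · push Not at h
    have hKuniv : ∀ i α, K i α = Set.univ := fun i α => by
      obtain ⟨β, hβ⟩ := h i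
      exact Set.compl_empty_iff.1 ((hK i).resolve_right (fun hi => hi β hβ) α)
    refine Or.inl fun α => Set.compl_empty_iff.2 (Set.eq_univ_of_forall fun a => ?_)
    exact ⟨fun _ => a, fun i β => (hKuniv i β).symm ▸ trivial, rfl⟩

lemma isEClosed_eInterFam (hτ : IsETopology τ) {ι : Type*} {K : ι → SoftSet X A}
    (hK : ∀ i, IsEClosed τ (K i)) : IsEClosed τ (eInterFam K) := by
  have hJc := inS_relCompl_eInterFam fun i => (hK i).2.1
  refine ⟨inS_SS _, hJc, ?_⟩
  by_cases hJ : eInterFam K = nullSoft X A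
  · rw [hJ, eCompl_nullSoft]
    exact hτ.absSoft_mem
  have h : eCompl (eInterFam K) = eUnionSet (Set.range fun i => eCompl (K i)) := by
    funext α
    rw [eCompl_apply hJc, eInterFam_apply hJ, Set.compl_iInter]
    refine Set.ext fun a => ⟨fun ha => ?_, fun ha => ?_⟩
    · obtain ⟨i, hi⟩ := Set.mem_iUnion.1 ha
      rw [← eCompl_apply (hK i).2.1] at hi
      exact (inS_SS _).softSubset_eUnionSet (Set.mem_range_self i) α hi
    · obtain ⟨_, ⟨i, rfl⟩, hai⟩ := exists_mem_of_mem_eUnionSet ha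
      exact Set.mem_iUnion.2 ⟨i, eCompl_apply_subset _ α hai⟩
  exact h ▸ hτ.eUnionSet_mem (Set.range_subset_iff.2 fun i => (hK i).2.2)

lemma IsEClosed.isECompactSet_of_softSubset {F K : SoftSet X A} (hF : IsEClosed τ F)
    (hK : IsECompactSet τ K) (hFK : softSubset F K) : IsECompactSet τ F := by
  refine ⟨hF.1, hF.2.1, fun s hs hcov => ?_⟩
  have hcovK : softSubset K (eUnionSet (insert (eCompl F) s)) := fun α a ha => by
    by_cases haF : a ∈ F α
    · obtain ⟨x, ⟨G, hGs, hxG⟩, hxa⟩ := hcov α haF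
      exact ⟨x, ⟨G, Set.mem_insert_of_mem _ hGs, hxG⟩, hxa⟩
    · have haF' : a ∈ eCompl F α := (eCompl_apply hF.2.1 α).symm ▸ haF
      exact (inS_SS _).softSubset_eUnionSet (Set.mem_insert _ _) α haF'
  obtain ⟨t, hts, htfin, htcov⟩ := hK.2.2 _ (Set.insert_subset hF.2.2 hs) hcovK
  refine ⟨t \ {eCompl F}, Set.sdiff_singleton_subset_iff.2 hts, htfin.sdiff, fun α a ha => ?_⟩
  obtain ⟨x, ⟨G, hGt, hxG⟩, rfl⟩ := htcov α (hFK α ha)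
  refine ⟨x, ⟨G, ⟨hGt, fun hG => ?_⟩, hxG⟩, rfl⟩
  exact eCompl_apply_subset F α (Set.mem_singleton_iff.1 hG ▸ hxG α) ha

end SoftE

open SoftE

theorem stmt11_general {X A : Type*} {ι : Type*}
    (τ : Set (SoftSet X A)) (hτ : IsETopology τ)
    (hqc : IsEQuasiCompact τ) (hH : IsEHausdorff τ)
    (K : ι → SoftSet X A) (hK : ∀ i, IsECompactSet τ (K i)) :
    IsECompactSet τ (eInterFam K) :=
  (isEClosed_eInterFam hτ fun i => (hK i).isEClosed hτ hH).isECompactSet_of_softSubset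
    (isECompactSet_absSoft hqc) fun _ _ _ => trivial

/-- in a soft e-compact soft e-Hausdorff space with pointwise
intersections of open sets in `S(X̃)`, a nonnull elementary intersection of a
family of soft e-compact sets is a soft e-compact set. -/
theorem stmt11 {X A : Type*} {ι : Type*}
    (τ : Set (SoftSet X A)) (hτ : IsETopology τ)
    (hqc : IsEQuasiCompact τ) (hH : IsEHausdorff τ)
    (hint : ∀ O₁ ∈ τ, ∀ O₂ ∈ τ, InS (fun α => O₁ α ∩ O₂ α))
    (K : ι → SoftSet X A) (hK : ∀ i, IsECompactSet τ (K i))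
    (hne : eInterFam K ≠ nullSoft X A) :
    IsECompactSet τ (eInterFam K) :=
  stmt11_general τ hτ hqc hH K hK
end
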